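/- Let G be a finite group, p a prime, and D an abelian radical p-subgroup of G with subgroups D_i ≤ D. If C_G(D) = C_G(D_i), then N_G(D) = N_G(D_i) for all such i satisfying D_i ≤ D. -/

import Mathlib

/-- The subgroup of `G` generated by all subgroups of `N` that are `p`-groups and
are normalized by `N`, i.e. `O_p(N)`, the largest normal `p`-subgroup of `N`. -/
def relPCore (p : ℕ) {G : Type*} [Group G] (N : Subgroup G) : Subgroup G :=
  sSup {Q : Subgroup G | Q ≤ N ∧ IsPGroup p Q ∧ ∀ n ∈ N, ∀ x ∈ Q, n * x * n⁻¹ ∈ Q}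

/-!
Since `D` is abelian, `D ≤ C := C_G(D) ⊴ N_G(D)`, so `D` is a normal `p`-subgroup of `C`, while
`O_p(C)`, being invariant under every automorphism normalizing `C`, is a normal `p`-subgroup of
`N_G(D)`; as `O_p(N_G(D)) = D`, this gives `D = O_p(C)`. An element normalizing `Dᵢ` normalizes
`C_G(Dᵢ) = C`, hence its `p`-core `D`; the reverse inclusion is the `N_G(D)`-invariance of `Dᵢ`.
-/

open Subgroup

namespace Subgroup

variable {G : Type*} [Group G]

theorem le_normalizer_iff_conj_mem {H K : Subgroup G} :
    H ≤ normalizer (K : Set G) ↔ ∀ h ∈ H, ∀ x ∈ K, h * x * h⁻¹ ∈ K := by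
  refine ⟨fun hHK h hh x hx => (mem_normalizer_iff.mp (hHK hh) x).mp hx, fun hHK h hh => ?_⟩
  refine mem_normalizer_iff.mpr fun x => ⟨hHK h hh x, fun hx => ?_⟩
  simpa [mul_assoc] using hHK h⁻¹ (inv_mem hh) _ hx

theorem normalizer_le_normalizer_centralizer (s : Set G) :
    normalizer s ≤ normalizer (centralizer s : Set G) :=
  le_normalizer_of_normal_subgroupOf (centralizer_le_normalizer s)

end Subgroup

section relPCore

variable {G G' : Type*} [Group G] [Group G'] {p : ℕ}

def normalPSubgroups (p : ℕ) (N : Subgroup G) : Set (Subgroup G) :=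
  {Q | Q ≤ N ∧ IsPGroup p Q ∧ N ≤ normalizer (Q : Set G)}

theorem relPCore_eq_sSup_normalPSubgroups (N : Subgroup G) :
    relPCore p N = sSup (normalPSubgroups p N) := by
  simp_rw [normalPSubgroups, le_normalizer_iff_conj_mem]
  rfl

theorem supClosed_normalPSubgroups (N : Subgroup G) : SupClosed (normalPSubgroups p N) := by
  rintro Q ⟨hQN, hQ, hNQ⟩ R ⟨hRN, hR, hNR⟩
  exact ⟨sup_le hQN hRN, hQ.to_sup_of_normal_right' hR (hQN.trans hNR),
    (le_inf hNQ hNR).trans (normalizer_inf_normalizer_le_normalizer_sup Q R)⟩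

theorem le_relPCore {N Q : Subgroup G} (hQN : Q ≤ N) (hQ : IsPGroup p Q)
    (hNQ : N ≤ normalizer (Q : Set G)) : Q ≤ relPCore p N := by
  rw [relPCore_eq_sSup_normalPSubgroups]
  exact le_sSup ⟨hQN, hQ, hNQ⟩

theorem relPCore_le (N : Subgroup G) : relPCore p N ≤ N := by
  rw [relPCore_eq_sSup_normalPSubgroups]
  exact sSup_le fun Q hQ => hQ.1

theorem isPGroup_relPCore (N : Subgroup G) : IsPGroup p (relPCore p N) := by
  rintro ⟨x, hx⟩
  rw [relPCore_eq_sSup_normalPSubgroups] at hx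
  have hne : (normalPSubgroups p N).Nonempty :=
    ⟨⊥, bot_le, IsPGroup.of_bot, le_normalizer_of_normal⟩
  obtain ⟨Q, ⟨-, hQ, -⟩, hxQ⟩ :=
    (mem_sSup_of_directedOn hne (supClosed_normalPSubgroups N).directedOn).mp hx
  obtain ⟨k, hk⟩ := hQ ⟨x, hxQ⟩
  exact ⟨k, Subtype.ext (by simpa using congrArg Subtype.val hk)⟩

theorem map_relPCore_le (f : G →* G') (N : Subgroup G) :
    (relPCore p N).map f ≤ relPCore p (N.map f) := by
  rw [relPCore_eq_sSup_normalPSubgroups, (gc_map_comap f).l_sSup]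
  refine iSup₂_le fun Q ⟨hQN, hQ, hNQ⟩ => le_relPCore (map_mono hQN) (hQ.map f) ?_
  exact (map_mono hNQ).trans (le_normalizer_map f)

theorem normalizer_le_normalizer_relPCore (N : Subgroup G) :
    normalizer (N : Set G) ≤ normalizer (relPCore p N : Set G) := by
  refine le_normalizer_iff_conj_mem.mpr fun g hg x hx => ?_
  have hmap := map_relPCore_le (p := p) (MulAut.conj g).toMonoidHom N
  rw [show N.map (MulAut.conj g).toMonoidHom = N from mem_normalizer_iff_map_conj_eq.mp hg] at hmap
  exact hmap (mem_map_of_mem _ hx)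

end relPCore

theorem stmt15_general {G : Type*} [Group G] (p : ℕ)
    (D : Subgroup G) (hD : IsPGroup p D)
    (hab : ∀ x ∈ D, ∀ y ∈ D, x * y = y * x)
    (hrad : relPCore p (Subgroup.normalizer (D : Set G)) = D)
    (Di : Subgroup G)
    (hchar : ∀ g ∈ Subgroup.normalizer (D : Set G), ∀ x ∈ Di, g * x * g⁻¹ ∈ Di)
    (h : Subgroup.centralizer (D : Set G) = Subgroup.centralizer (Di : Set G)) :
    Subgroup.normalizer (D : Set G) = Subgroup.normalizer (Di : Set G) := by
  set C := centralizer (D : Set G)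
  have hDC : D ≤ C := fun x hx => mem_centralizer_iff.mpr fun y hy => hab y hy x hx
  have hCD : C ≤ normalizer (D : Set G) := centralizer_le_normalizer _
  have hcore : relPCore p C = D := by
    refine le_antisymm ?_ (le_relPCore hDC hD hCD)
    conv_rhs => rw [← hrad]
    exact le_relPCore ((relPCore_le C).trans hCD) (isPGroup_relPCore C)
      ((normalizer_le_normalizer_centralizer _).trans (normalizer_le_normalizer_relPCore C))
  refine le_antisymm (le_normalizer_iff_conj_mem.mpr hchar) ?_
  calc normalizer (Di : Set G)
      ≤ normalizer (C : Set G) := h ▸ normalizer_le_normalizer_centralizer _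
    _ ≤ normalizer (relPCore p C : Set G) := normalizer_le_normalizer_relPCore C
    _ = normalizer (D : Set G) := by rw [hcore]

/-- Let `D` be an abelian radical `p`-subgroup of the finite group `G` and let `Dᵢ ≤ D`
be a subgroup which is characteristic in `D` (as for the subgroups of a cyclic group;
equivalently, invariant under conjugation by `N_G(D)`). If `C_G(D) = C_G(Dᵢ)`, then
`N_G(D) = N_G(Dᵢ)`. -/
theorem stmt15 {G : Type*} [Group G] [Finite G] (p : ℕ) (hp : p.Prime)
    (D : Subgroup G) (hD : IsPGroup p D)
    (hab : ∀ x ∈ D, ∀ y ∈ D, x * y = y * x)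
    (hrad : relPCore p (Subgroup.normalizer (D : Set G)) = D)
    (Di : Subgroup G) (hDile : Di ≤ D)
    (hchar : ∀ g ∈ Subgroup.normalizer (D : Set G), ∀ x ∈ Di, g * x * g⁻¹ ∈ Di)
    (h : Subgroup.centralizer (D : Set G) = Subgroup.centralizer (Di : Set G)) :
    Subgroup.normalizer (D : Set G) = Subgroup.normalizer (Di : Set G) :=
  stmt15_general p D hD hab hrad Di hchar h
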